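/- Let $\gamma$ be the larger root of $x^2 - px - q$ with integers $1 \leq q \leq p$. If $d_\ell \in \{0,1,\ldots,p\}$ for all $\ell \geq 0$ and whenever $d_{\ell} = p$ one has $d_{\ell+1} < q$ (any digit to the left of a $p$ is strictly less than $q$) for a finitely supported digit sequence, then $\sum_{\ell \geq 0} d_\ell \gamma^{-(\ell+1)} < 1$. -/
import Mathlib

private lemma aux_admissible (p q : ℕ) (hq1 : 1 ≤ q) (hqp : q ≤ p) (γ : ℝ)
    (hγ1 : (p : ℝ) < γ) (hγp : γ ^ 2 = p * γ + q) :
    ∀ N (d : ℕ → ℕ), (∀ ℓ, d ℓ ≤ p) → (∀ ℓ, d ℓ = p → d (ℓ + 1) < q) →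
      ∑ i ∈ Finset.range N, (d i : ℝ) / γ ^ (i + 1) < 1 := by
  have hp1 : (1 : ℝ) ≤ p := by exact_mod_cast le_trans hq1 hqp
  have hγ0 : (0 : ℝ) < γ := lt_trans (by linarith) hγ1
  have hne : γ ≠ 0 := ne_of_gt hγ0
  intro N
  induction N using Nat.strong_induction_on with
  | _ N ih =>
    intro d hle hadm
    match N with
    | 0 => simp
    | 1 =>
      have h0 : (d 0 : ℝ) ≤ p := by exact_mod_cast hle 0
      have : (d 0 : ℝ) / γ ^ (0 + 1) < 1 := by
        rw [zero_add, pow_one, div_lt_one hγ0]; linarith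
      simpa using this
    | Nat.succ (Nat.succ m) =>
      rcases lt_or_eq_of_le (hle 0) with hd0 | hd0
      · -- d 0 < p : peel one term
        have IH : (∑ i ∈ Finset.range (m + 1), (d (i + 1) : ℝ) / γ ^ (i + 1)) < 1 :=
          ih (m + 1) (by omega) (fun i => d (i + 1)) (fun i => hle (i + 1))
            (fun i h => hadm (i + 1) h)
        have key : ∑ i ∈ Finset.range (m + 1), ((d (i + 1) : ℝ)) / γ ^ (i + 1 + 1)
            = (∑ i ∈ Finset.range (m + 1), (d (i + 1) : ℝ) / γ ^ (i + 1)) * γ⁻¹ := by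
          rw [Finset.sum_mul]
          refine Finset.sum_congr rfl fun i _ => ?_
          rw [pow_succ, div_eq_mul_inv, div_eq_mul_inv, mul_inv]
          ring
        rw [Finset.sum_range_succ', key]
        have h0 : (d 0 : ℝ) ≤ (p : ℝ) - 1 := by
          have : (d 0 : ℝ) + 1 ≤ p := by exact_mod_cast hd0
          linarith
        have hpos : (0 : ℝ) ≤ ∑ i ∈ Finset.range (m + 1), (d (i + 1) : ℝ) / γ ^ (i + 1) :=
          Finset.sum_nonneg fun i _ => by positivity
        have hinv : (0 : ℝ) < γ⁻¹ := by positivity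
        have h1 : (∑ i ∈ Finset.range (m + 1), (d (i + 1) : ℝ) / γ ^ (i + 1)) * γ⁻¹
            < 1 * γ⁻¹ := mul_lt_mul_of_pos_right IH hinv
        have h2 : (d 0 : ℝ) / γ ^ (0 + 1) ≤ ((p : ℝ) - 1) * γ⁻¹ := by
          rw [zero_add, pow_one, div_eq_mul_inv]
          exact mul_le_mul_of_nonneg_right h0 (le_of_lt hinv)
        have h3 : 1 * γ⁻¹ + ((p : ℝ) - 1) * γ⁻¹ < 1 := by
          have hpγ : (p : ℝ) * γ⁻¹ < 1 := by
            rw [← div_eq_mul_inv, div_lt_one hγ0]; exact hγ1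
          ring_nf
          ring_nf at hpγ
          linarith
        linarith
      · -- d 0 = p : peel two terms
        have IH : (∑ i ∈ Finset.range m, (d (i + 1 + 1) : ℝ) / γ ^ (i + 1)) < 1 :=
          ih m (by omega) (fun i => d (i + 1 + 1)) (fun i => hle (i + 1 + 1))
            (fun i h => hadm (i + 1 + 1) h)
        have hd1 : (d 1 : ℝ) ≤ (q : ℝ) - 1 := by
          have h := hadm 0 hd0
          have : (d 1 : ℝ) + 1 ≤ q := by exact_mod_cast h
          linarith
        have key2 : ∑ i ∈ Finset.range m, ((d (i + 1 + 1) : ℝ)) / γ ^ (i + 1 + 1 + 1)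
            = (∑ i ∈ Finset.range m, (d (i + 1 + 1) : ℝ) / γ ^ (i + 1)) * (γ⁻¹ * γ⁻¹) := by
          rw [Finset.sum_mul]
          refine Finset.sum_congr rfl fun i _ => ?_
          rw [pow_succ, pow_succ, div_eq_mul_inv, div_eq_mul_inv, mul_inv, mul_inv]
          ring
        rw [Finset.sum_range_succ', Finset.sum_range_succ', key2]
        have hpos : (0 : ℝ) ≤ ∑ i ∈ Finset.range m, (d (i + 1 + 1) : ℝ) / γ ^ (i + 1) :=
          Finset.sum_nonneg fun i _ => by positivity
        have hinv : (0 : ℝ) < γ⁻¹ := by positivity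
        have h1 : (∑ i ∈ Finset.range m, (d (i + 1 + 1) : ℝ) / γ ^ (i + 1)) * (γ⁻¹ * γ⁻¹)
            < 1 * (γ⁻¹ * γ⁻¹) := mul_lt_mul_of_pos_right IH (by positivity)
        have h2 : (d (0 + 1) : ℝ) / γ ^ (0 + 1 + 1) ≤ ((q : ℝ) - 1) * (γ⁻¹ * γ⁻¹) := by
          have he : (0 : ℕ) + 1 + 1 = 2 := rfl
          rw [zero_add, he, sq, div_eq_mul_inv, mul_inv]
          exact mul_le_mul_of_nonneg_right hd1 (by positivity)
        have h3 : (d 0 : ℝ) / γ ^ (0 + 1) = (p : ℝ) * γ⁻¹ := by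
          rw [hd0, zero_add, pow_one, div_eq_mul_inv]
        rw [h3]
        have hfinal : 1 * (γ⁻¹ * γ⁻¹) + ((q : ℝ) - 1) * (γ⁻¹ * γ⁻¹) + (p : ℝ) * γ⁻¹ = 1 := by
          field_simp
          nlinarith [hγp]
        linarith

/-- Let `γ` be the larger root of `x² - px - q` with integers `1 ≤ q ≤ p`.
If `d ℓ ∈ {0,…,p}` for all `ℓ`, and whenever `d ℓ = p` one has `d (ℓ+1) < q`,
for a finitely supported digit sequence `d`, then `∑_ℓ d ℓ * γ^{-(ℓ+1)} < 1`. -/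
theorem admissible_digits_sum_lt_one (p q : ℕ) (hq1 : 1 ≤ q) (hqp : q ≤ p)
    (d : ℕ → ℕ) (hfin : (Function.support d).Finite)
    (hle : ∀ ℓ, d ℓ ≤ p) (hadm : ∀ ℓ, d ℓ = p → d (ℓ + 1) < q) :
    let γ : ℝ := ((p : ℝ) + Real.sqrt ((p : ℝ) ^ 2 + 4 * q)) / 2
    (∑ᶠ ℓ : ℕ, (d ℓ : ℝ) / γ ^ (ℓ + 1)) < 1 := by
  intro γ
  have hq1' : (1 : ℝ) ≤ q := by exact_mod_cast hq1
  have hs0 : (0 : ℝ) ≤ (p : ℝ) ^ 2 + 4 * q := by positivity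
  set s := Real.sqrt ((p : ℝ) ^ 2 + 4 * q) with hs
  have hs2 : s ^ 2 = (p : ℝ) ^ 2 + 4 * q := Real.sq_sqrt hs0
  have hsnn : 0 ≤ s := Real.sqrt_nonneg _
  have hsp : (p : ℝ) < s := by nlinarith
  have hγ1 : (p : ℝ) < γ := by simp only [γ]; linarith
  have hγp : γ ^ 2 = p * γ + q := by simp only [γ]; nlinarith
  obtain ⟨M, hM⟩ := hfin.bddAbove
  have hsub : Function.support (fun ℓ : ℕ => (d ℓ : ℝ) / γ ^ (ℓ + 1)) ⊆
      ↑(Finset.range (M + 1)) := by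
    intro x hx
    simp only [Finset.coe_range, Set.mem_Iio]
    by_contra h
    have hdx : d x = 0 := by
      by_contra hdx
      exact h (Nat.lt_succ_of_le (hM hdx))
    simp [Function.mem_support, hdx] at hx
  rw [finsum_eq_sum_of_support_subset _ hsub]
  exact aux_admissible p q hq1 hqp γ hγ1 hγp (M + 1) d hle hadm
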